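/- If Λ̂ maximizes the dual GEL objective Ĝ(Λ) := N^{−1}·Σ_{i=1}^N ρ(u_i^⊤ Λ v_i) − (N^{−1}Σ_{i=1}^N u_i)^⊤ Λ (N^{−1}Σ_{j=1}^N v_j) over ℝ^{k₁×k_Z}, where ρ(v) := −exp(−v−1), then the weights π̂_i := exp(−u_i^⊤ Λ̂ v_i − 1) solve the primal entropy problem: (π̂_1, …, π̂_N) maximizes the entropy −N^{−1}·Σ_{i=1}^N π_i log π_i over all (π_1, …, π_N) ∈ (0, ∞)^N subject to the constraints N^{−1}·Σ_{i=1}^N π_i · u_i v_i^⊤ = (N^{−1}Σ_{i=1}^N u_i)(N^{−1}Σ_{j=1}^N v_j)^⊤. -/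

import Mathlib

/-!
STATEMENT 4: If `Λ̂` maximizes the dual GEL objective
`Ĝ(Λ) := N⁻¹ Σᵢ ρ(uᵢᵀ Λ vᵢ) − (N⁻¹ Σᵢ uᵢ)ᵀ Λ (N⁻¹ Σⱼ vⱼ)` over `ℝ^{k₁ × k_Z}`,
where `ρ(v) = −exp(−v−1)`, then the weights `π̂ᵢ := exp(−uᵢᵀ Λ̂ vᵢ − 1)` solve the primal
entropy problem: `(π̂₁, …, π̂_N)` maximizes `−N⁻¹ Σᵢ πᵢ log πᵢ` over all strictly positive
weight vectors satisfying the balancing constraints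
`N⁻¹ Σᵢ πᵢ uᵢ vᵢᵀ = (N⁻¹ Σᵢ uᵢ)(N⁻¹ Σⱼ vⱼ)ᵀ` (and `π̂` itself is feasible).
-/

open Matrix

noncomputable section

/-- `ρ(v) = −exp(−v−1)`. -/
def rhoGEL (v : ℝ) : ℝ := -Real.exp (-v - 1)

/-- The dual GEL objective `Ĝ`. -/
def dualGELObjective (N k₁ kZ : ℕ) (u : Fin N → Fin k₁ → ℝ) (v : Fin N → Fin kZ → ℝ)
    (Λ : Matrix (Fin k₁) (Fin kZ) ℝ) : ℝ :=
  (N : ℝ)⁻¹ * ∑ i, rhoGEL (u i ⬝ᵥ (Λ *ᵥ v i)) -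
    ((N : ℝ)⁻¹ • ∑ i, u i) ⬝ᵥ (Λ *ᵥ ((N : ℝ)⁻¹ • ∑ j, v j))

/-- The empirical balancing constraint of the primal entropy problem. -/
def balancingConstraint (N k₁ kZ : ℕ) (u : Fin N → Fin k₁ → ℝ) (v : Fin N → Fin kZ → ℝ)
    (π : Fin N → ℝ) : Prop :=
  (N : ℝ)⁻¹ • ∑ i, π i • vecMulVec (u i) (v i) =
    vecMulVec ((N : ℝ)⁻¹ • ∑ i, u i) ((N : ℝ)⁻¹ • ∑ j, v j)

/-- The (scaled) entropy objective of the primal problem. -/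
def entropyObjective (N : ℕ) (π : Fin N → ℝ) : ℝ :=
  -((N : ℝ)⁻¹ * ∑ i, π i * Real.log (π i))

/-- Convexity inequality for `x ↦ x log x`. -/
lemma keyConvexEntropy (x y : ℝ) (hx : 0 < x) (hy : 0 < y) :
    y * Real.log y + (Real.log y + 1) * (x - y) ≤ x * Real.log x := by
  have h := Real.log_le_sub_one_of_pos (show 0 < y / x from div_pos hy hx)
  rw [Real.log_div hy.ne' hx.ne'] at h
  have hxy : y / x * x = y := div_mul_cancel₀ y hx.ne'
  nlinarith [mul_le_mul_of_nonneg_left h hx.le]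

lemma dot_stdBasis_mulVec {k₁ kZ : ℕ} (w : Fin k₁ → ℝ) (z : Fin kZ → ℝ)
    (α : Fin k₁) (β : Fin kZ) :
    w ⬝ᵥ (Matrix.single α β (1 : ℝ) *ᵥ z) = w α * z β := by
  simp [dotProduct, mulVec, Matrix.single, ite_and, mul_ite, Finset.mul_sum]

/-- First-order condition at the maximizer, in an arbitrary direction `E`. -/
lemma stationarity (N k₁ kZ : ℕ) (u : Fin N → Fin k₁ → ℝ) (v : Fin N → Fin kZ → ℝ)
    (Λhat : Matrix (Fin k₁) (Fin kZ) ℝ)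
    (hmax : ∀ Λ : Matrix (Fin k₁) (Fin kZ) ℝ,
      dualGELObjective N k₁ kZ u v Λ ≤ dualGELObjective N k₁ kZ u v Λhat)
    (E : Matrix (Fin k₁) (Fin kZ) ℝ) :
    (N : ℝ)⁻¹ * ∑ i, (u i ⬝ᵥ (E *ᵥ v i)) * Real.exp (-(u i ⬝ᵥ (Λhat *ᵥ v i)) - 1)
      = ((N : ℝ)⁻¹ • ∑ i, u i) ⬝ᵥ (E *ᵥ ((N : ℝ)⁻¹ • ∑ j, v j)) := by
  set a : Fin N → ℝ := fun i => u i ⬝ᵥ (Λhat *ᵥ v i) with ha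
  set b : Fin N → ℝ := fun i => u i ⬝ᵥ (E *ᵥ v i) with hb
  set c : ℝ := ((N : ℝ)⁻¹ • ∑ i, u i) ⬝ᵥ (Λhat *ᵥ ((N : ℝ)⁻¹ • ∑ j, v j)) with hc
  set d : ℝ := ((N : ℝ)⁻¹ • ∑ i, u i) ⬝ᵥ (E *ᵥ ((N : ℝ)⁻¹ • ∑ j, v j)) with hd
  set g : ℝ → ℝ :=
    fun t => (N : ℝ)⁻¹ * ∑ i, (-(Real.exp (-(a i + t * b i) - 1))) - (c + t * d) with hgdef
  have hkey : ∀ (w : Fin k₁ → ℝ) (z : Fin kZ → ℝ) (t : ℝ),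
      w ⬝ᵥ ((Λhat + t • E) *ᵥ z) = w ⬝ᵥ (Λhat *ᵥ z) + t * (w ⬝ᵥ (E *ᵥ z)) := by
    intro w z t
    simp [add_mulVec, smul_mulVec, dotProduct_add, dotProduct_smul, smul_eq_mul]
  have hg : ∀ t, g t = dualGELObjective N k₁ kZ u v (Λhat + t • E) := by
    intro t
    simp only [hgdef, dualGELObjective, rhoGEL, hkey, ha, hb, hc, hd]
  have hloc : IsLocalMax g 0 := by
    apply Filter.Eventually.of_forall
    intro t
    rw [hg t, hg 0]
    simp only [zero_smul, add_zero]
    exact hmax _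
  have hD : HasDerivAt g ((N : ℝ)⁻¹ * ∑ i, b i * Real.exp (-(a i) - 1) - d) 0 := by
    have h1 : ∀ i : Fin N, HasDerivAt (fun t : ℝ => -(Real.exp (-(a i + t * b i) - 1)))
        (b i * Real.exp (-(a i) - 1)) 0 := by
      intro i
      have hinner : HasDerivAt (fun t : ℝ => -(a i + t * b i) - 1) (-(b i)) 0 := by
        have h := ((((hasDerivAt_id (0:ℝ)).mul_const (b i)).const_add (a i)).neg).sub_const 1
        simpa using h
      have h2 := hinner.exp.fun_neg
      refine h2.congr_deriv ?_
      simp only [zero_mul, add_zero]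
      ring
    have hsum : HasDerivAt (fun t : ℝ => ∑ i, (-(Real.exp (-(a i + t * b i) - 1))))
        (∑ i, b i * Real.exp (-(a i) - 1)) 0 :=
      HasDerivAt.fun_sum (fun i _ => h1 i)
    have hlin : HasDerivAt (fun t : ℝ => c + t * d) d 0 := by
      simpa using (hasDerivAt_mul_const d).const_add c
    exact (hsum.const_mul ((N : ℝ)⁻¹)).sub hlin
  have h0 : (N : ℝ)⁻¹ * ∑ i, b i * Real.exp (-(a i) - 1) - d = 0 := by
    rw [← hD.deriv]
    exact hloc.deriv_eq_zero
  show (N : ℝ)⁻¹ * ∑ i, b i * Real.exp (-(a i) - 1) = d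
  exact sub_eq_zero.mp h0

theorem dualGEL_maximizer_solves_primal_entropy
    (N k₁ kZ : ℕ) (hN : 1 ≤ N) (u : Fin N → Fin k₁ → ℝ) (v : Fin N → Fin kZ → ℝ)
    (Λhat : Matrix (Fin k₁) (Fin kZ) ℝ)
    (hmax : ∀ Λ : Matrix (Fin k₁) (Fin kZ) ℝ,
      dualGELObjective N k₁ kZ u v Λ ≤ dualGELObjective N k₁ kZ u v Λhat) :
    balancingConstraint N k₁ kZ u v (fun i => Real.exp (-(u i ⬝ᵥ (Λhat *ᵥ v i)) - 1)) ∧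
      ∀ π : Fin N → ℝ, (∀ i, 0 < π i) → balancingConstraint N k₁ kZ u v π →
        entropyObjective N π ≤
          entropyObjective N (fun i => Real.exp (-(u i ⬝ᵥ (Λhat *ᵥ v i)) - 1)) := by
  set p : Fin N → ℝ := fun i => Real.exp (-(u i ⬝ᵥ (Λhat *ᵥ v i)) - 1) with hp
  have hNpos : (0 : ℝ) < (N : ℝ) := by exact_mod_cast Nat.lt_of_lt_of_le Nat.zero_lt_one hN
  have hNinv : (N : ℝ)⁻¹ ≠ 0 := inv_ne_zero hNpos.ne'
  -- feasibility of p
  have hfeas : balancingConstraint N k₁ kZ u v p := by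
    unfold balancingConstraint
    ext α β
    have hst := stationarity N k₁ kZ u v Λhat hmax (Matrix.single α β (1 : ℝ))
    simp only [dot_stdBasis_mulVec] at hst
    simp only [Matrix.smul_apply, Matrix.sum_apply, vecMulVec_apply, smul_eq_mul]
    rw [← hst]
    congr 1
    exact Finset.sum_congr rfl fun i _ => by simp [hp]; ring
  refine ⟨hfeas, ?_⟩
  intro π hπ hbal
  -- common value of the linear functional Σᵢ wᵢ aᵢ for feasible w
  have hcancel : (∑ i, π i • vecMulVec (u i) (v i)) = ∑ i, p i • vecMulVec (u i) (v i) := by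
    have : (N : ℝ)⁻¹ • (∑ i, π i • vecMulVec (u i) (v i)) =
        (N : ℝ)⁻¹ • ∑ i, p i • vecMulVec (u i) (v i) := by
      rw [hbal, hfeas]
    exact smul_right_injective _ hNinv this
  have hentry : ∀ (α : Fin k₁) (β : Fin kZ),
      ∑ i, π i * (u i α * v i β) = ∑ i, p i * (u i α * v i β) := by
    intro α β
    have := congrArg (fun M : Matrix (Fin k₁) (Fin kZ) ℝ => M α β) hcancel
    simpa [Matrix.sum_apply, vecMulVec_apply, smul_eq_mul, mul_assoc] using this
  have expand : ∀ w : Fin N → ℝ, ∑ i, w i * (u i ⬝ᵥ (Λhat *ᵥ v i)) =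
      ∑ α, ∑ β, Λhat α β * ∑ i, w i * (u i α * v i β) := by
    intro w
    simp only [dotProduct, mulVec, Finset.mul_sum]
    rw [Finset.sum_comm]
    refine Finset.sum_congr rfl fun α _ => ?_
    rw [Finset.sum_comm]
    exact Finset.sum_congr rfl fun β _ => Finset.sum_congr rfl fun i _ => by ring
  have hlin : ∑ i, π i * (u i ⬝ᵥ (Λhat *ᵥ v i)) = ∑ i, p i * (u i ⬝ᵥ (Λhat *ᵥ v i)) := by
    rw [expand π, expand p]
    exact Finset.sum_congr rfl fun α _ => Finset.sum_congr rfl fun β _ => by rw [hentry α β]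
  -- entropy comparison
  have hlog : ∀ i, Real.log (p i) = -(u i ⬝ᵥ (Λhat *ᵥ v i)) - 1 := fun i => Real.log_exp _
  have hsum : ∑ i, (p i * Real.log (p i) + (Real.log (p i) + 1) * (π i - p i)) ≤
      ∑ i, π i * Real.log (π i) :=
    Finset.sum_le_sum fun i _ => keyConvexEntropy (π i) (p i) (hπ i) (Real.exp_pos _)
  have hzero : ∑ i, (Real.log (p i) + 1) * (π i - p i) = 0 := by
    have h1 : ∀ i, (Real.log (p i) + 1) * (π i - p i) =
        p i * (u i ⬝ᵥ (Λhat *ᵥ v i)) - π i * (u i ⬝ᵥ (Λhat *ᵥ v i)) := by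
      intro i; rw [hlog i]; ring
    simp only [h1, Finset.sum_sub_distrib]
    rw [hlin]
    ring
  have hfinal : ∑ i, p i * Real.log (p i) ≤ ∑ i, π i * Real.log (π i) := by
    have := hsum
    rw [Finset.sum_add_distrib, hzero, add_zero] at this
    exact this
  unfold entropyObjective
  exact neg_le_neg (mul_le_mul_of_nonneg_left hfinal (inv_nonneg.mpr hNpos.le))
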